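/- Fix a > −g/γ. For any x > 0: sup over ν ∈ [a, (a + g/γ) e^{γ²x/(4g)} − g/γ] of P_{(x/2, ν)}(σ(0) < τ_a^V) is at most (2√(2γ)/√(πgx)) exp{−xg/(8γ)}. -/

import Mathlib

open MeasureTheory ProbabilityTheory Filter Set
open scoped ENNReal NNReal

noncomputable section

/-- A standard one-dimensional Brownian motion under the measure `P`. -/
structure IsStdBrownian {Ω : Type*} [MeasurableSpace Ω] (P : Measure Ω)
    (B : ℝ → Ω → ℝ) : Prop where
  measurable : ∀ t : ℝ, Measurable (B t)
  start : ∀ᵐ ω ∂P, B 0 ω = 0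
  contPaths : ∀ᵐ ω ∂P, Continuous fun t => B t ω
  indepIncr : ∀ (n : ℕ) (t : ℕ → ℝ), Monotone t → (∀ i, 0 ≤ t i) →
    iIndepFun
      (fun (i : Fin n) ω => B (t (i.1 + 1)) ω - B (t i.1) ω) P
  gaussIncr : ∀ s t : ℝ, 0 ≤ s → s ≤ t →
    P.map (fun ω => B t ω - B s ω) = gaussianReal 0 (Real.toNNReal (t - s))

/-- The inert particle system: for every initial condition `(h, ν)` a law `law (h, ν)`
under which `B` is a standard Brownian motion and `(H, V, L)` solves the reflected system
`dH = V dt − dB + dL`, `dV = −(γ V + g) dt + dL`, `L` being the local time of `H` at `0`. -/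
structure InertSystem (γ g : ℝ) (Ω : Type*) [MeasurableSpace Ω] where
  law : ℝ × ℝ → Measure Ω
  prob : ∀ p, IsProbabilityMeasure (law p)
  B : ℝ → Ω → ℝ
  H : ℝ → Ω → ℝ
  V : ℝ → Ω → ℝ
  L : ℝ → Ω → ℝ
  measurable_H : ∀ t, Measurable (H t)
  measurable_V : ∀ t, Measurable (V t)
  measurable_L : ∀ t, Measurable (L t)
  brownian : ∀ p, IsStdBrownian (law p) B
  init : ∀ p : ℝ × ℝ, ∀ᵐ ω ∂law p, H 0 ω = p.1 ∧ V 0 ω = p.2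
  contPaths : ∀ p, ∀ᵐ ω ∂law p,
    (Continuous fun t => H t ω) ∧ (Continuous fun t => V t ω) ∧ (Continuous fun t => L t ω)
  gap_nonneg : ∀ p, ∀ᵐ ω ∂law p, ∀ t, 0 ≤ t → 0 ≤ H t ω
  loc_zero : ∀ p, ∀ᵐ ω ∂law p, L 0 ω = 0
  loc_nonneg : ∀ p, ∀ᵐ ω ∂law p, ∀ t, 0 ≤ t → 0 ≤ L t ω
  loc_mono : ∀ p, ∀ᵐ ω ∂law p, MonotoneOn (fun t => L t ω) (Ici (0:ℝ))
  loc_support : ∀ p, ∀ᵐ ω ∂law p, ∀ s t : ℝ, 0 ≤ s → s ≤ t →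
    (∀ u ∈ Icc s t, H u ω ≠ 0) → L s ω = L t ω
  eqH : ∀ p, ∀ᵐ ω ∂law p, ∀ t, 0 ≤ t →
    H t ω = H 0 ω + (∫ u in (0:ℝ)..t, V u ω) - B t ω + L t ω
  eqV : ∀ p, ∀ᵐ ω ∂law p, ∀ t, 0 ≤ t →
    V t ω = V 0 ω - (∫ u in (0:ℝ)..t, (γ * V u ω + g)) + L t ω

/-- The state space `S = [0,∞) × (−g/γ, ∞)`. -/
def stateSpace (γ g : ℝ) : Set (ℝ × ℝ) := Ici (0:ℝ) ×ˢ Ioi (-(g/γ))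

/-- The velocity coordinate `−g/(1+γ)` of the renewal point. -/
def renewalV (γ g : ℝ) : ℝ := -(g / (1 + γ))

/-- `a = −(g + g/(2γ))/(1+γ)`. -/
def aPt (γ g : ℝ) : ℝ := -((g + g / (2 * γ)) / (1 + γ))

/-- `b = −(g − g/(2(1+γ)))/(1+γ)`. -/
def bPt (γ g : ℝ) : ℝ := -((g - g / (2 * (1 + γ))) / (1 + γ))

/-- First time `t ≥ 0` with (extended-real) `t ≥ s` at which `f t = c`; `∞` if no such time. -/
def hitFrom (f : ℝ → ℝ) (c : ℝ) (s : ℝ≥0∞) : ℝ≥0∞ :=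
  ⨅ t ∈ {t : ℝ | 0 ≤ t ∧ s ≤ ENNReal.ofReal t ∧ f t = c}, ENNReal.ofReal t

namespace InertSystem

variable {γ g : ℝ} {Ω : Type*} [MeasurableSpace Ω] (sys : InertSystem γ g Ω)

/-- `τ_c^V`, the first hitting time of level `c` by the velocity. -/
def tauV (c : ℝ) (ω : Ω) : ℝ≥0∞ := hitFrom (fun t => sys.V t ω) c 0

/-- `τ_x^H`, the first hitting time of level `x` by the gap. -/
def tauH (x : ℝ) (ω : Ω) : ℝ≥0∞ := hitFrom (fun t => sys.H t ω) x 0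

/-- `σ(s)`, the first time `≥ s` at which the gap vanishes. -/
def sigmaFrom (s : ℝ≥0∞) (ω : Ω) : ℝ≥0∞ := hitFrom (fun t => sys.H t ω) 0 s

/-- The renewal time `ζ`. -/
def zeta (ω : Ω) : ℝ≥0∞ :=
  ⨅ t ∈ {t : ℝ | 0 ≤ t ∧
      min (sys.tauV (aPt γ g) ω) (sys.tauV (bPt γ g) ω) ≤ ENNReal.ofReal t ∧
      sys.H t ω = 0 ∧ sys.V t ω = renewalV γ g}, ENNReal.ofReal t

/-- The transition probability `P^t((h,ν), ·)`. -/
def transKernel (t : ℝ) (p : ℝ × ℝ) : Measure (ℝ × ℝ) :=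
  (sys.law p).map fun ω => (sys.H t ω, sys.V t ω)

/-- A stationary distribution for the pair `(H, V)`. -/
def IsStationary (π : Measure (ℝ × ℝ)) : Prop :=
  IsProbabilityMeasure π ∧ π (stateSpace γ g)ᶜ = 0 ∧
    ∀ t : ℝ, 0 ≤ t → ∀ A : Set (ℝ × ℝ), MeasurableSet A →
      (∫⁻ p, sys.law p {ω | (sys.H t ω, sys.V t ω) ∈ A} ∂π) = π A

/-- The occupation time `∫_0^ζ 1{(H_t, V_t) ∈ A} dt` of the set `A` before the renewal time. -/
def occupation (A : Set (ℝ × ℝ)) (ω : Ω) : ℝ≥0∞ :=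
  volume {t : ℝ | 0 ≤ t ∧ ENNReal.ofReal t < sys.zeta ω ∧ (sys.H t ω, sys.V t ω) ∈ A}

end InertSystem

/-- Total variation distance (sup over Borel sets of the discrepancy). -/
def tvDist (μ ν : Measure (ℝ × ℝ)) : ℝ :=
  ⨆ A ∈ {A : Set (ℝ × ℝ) | MeasurableSet A}, |(μ A).toReal - (ν A).toReal|

end

/-! On the event `σ(0) < τ_a^V`, let `t₀` be the first zero of `H`. Before `t₀` there is no
local time and `V ≥ a`, so `V` follows the solution of `V' = -(γ V + g)`, which by the upper bound
on `ν` reaches `a` by time `T = γ x / (4 g)`; hence `t₀ ≤ T`. Then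
`0 = H t₀ = x/2 + ∫₀^t₀ V - B t₀ ≥ x/2 - (g/γ) T - B t₀ = x/4 - B t₀`, so `B` reaches `x/4`
before `T`. The reflection principle, obtained from Lévy's maximal inequality on dyadic grids,
bounds this by `2 P(B_T ≥ x/4)`, and Mills' bound on the Gaussian tail gives the constant. -/

lemma hitFrom_zero_le {f : ℝ → ℝ} {c u : ℝ} (hu : 0 ≤ u) (hfu : f u = c) :
    hitFrom f c 0 ≤ ENNReal.ofReal u :=
  iInf₂_le u ⟨hu, zero_le, hfu⟩

lemma ne_of_ofReal_lt_hitFrom_zero {f : ℝ → ℝ} {c u : ℝ} (hu : 0 ≤ u)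
    (h : ENNReal.ofReal u < hitFrom f c 0) : f u ≠ c :=
  fun hfu => (hitFrom_zero_le hu hfu).not_gt h

lemma exists_hitFrom_zero_eq_ofReal {f : ℝ → ℝ} {c : ℝ} (hf : Continuous f)
    (h : hitFrom f c 0 < ⊤) : ∃ t, 0 ≤ t ∧ f t = c ∧ hitFrom f c 0 = ENNReal.ofReal t := by
  let S := Ici (0 : ℝ) ∩ f ⁻¹' {c}
  have hS : S.Nonempty := by
    obtain ⟨t, ht⟩ := iInf_lt_iff.mp h
    obtain ⟨⟨ht0, -, hft⟩, -⟩ := iInf_lt_iff.mp ht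
    exact ⟨t, ht0, hft⟩
  have hbdd : BddBelow S := ⟨0, fun _ ht => ht.1⟩
  obtain ⟨hmem0, hmemf⟩ : sInf S ∈ S :=
    (isClosed_Ici.inter (isClosed_singleton.preimage hf)).csInf_mem hS hbdd
  refine ⟨sInf S, hmem0, hmemf, le_antisymm (hitFrom_zero_le hmem0 hmemf) ?_⟩
  exact le_iInf₂ fun t ht => ENNReal.ofReal_le_ofReal (csInf_le hbdd ⟨ht.1, ht.2.2⟩)

lemma eqOn_zero_of_const_off_zeros {H L : ℝ → ℝ} {t₀ : ℝ} (hLc : Continuous L) (hL0 : L 0 = 0)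
    (hLsupp : ∀ s t : ℝ, 0 ≤ s → s ≤ t → (∀ u ∈ Icc s t, H u ≠ 0) → L s = L t)
    (hH : ∀ u ∈ Ico 0 t₀, H u ≠ 0) : EqOn L 0 (Icc 0 t₀) := by
  have hIco : EqOn L 0 (Ico 0 t₀) := fun u hu =>
    (hLsupp 0 u le_rfl hu.1 fun w hw => hH w ⟨hw.1, hw.2.trans_lt hu.2⟩).symm.trans hL0
  rcases eq_or_ne 0 t₀ with rfl | ht₀
  · intro u hu
    rw [le_antisymm hu.2 hu.1, hL0, Pi.zero_apply]
  · rw [← closure_Ico ht₀]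
    exact hIco.closure hLc continuous_const

lemma eqOn_exp_of_eq_sub_integral {γ g ν t₀ : ℝ} (hγ : γ ≠ 0) {V : ℝ → ℝ} (hVc : Continuous V)
    (hV : ∀ u ∈ Icc 0 t₀, V u = ν - ∫ s in (0:ℝ)..u, (γ * V s + g)) :
    EqOn V (fun u => (ν + g / γ) * Real.exp (-(γ * u)) - g / γ) (Icc 0 t₀) := by
  let F : ℝ → ℝ := fun u => ν - ∫ s in (0:ℝ)..u, (γ * V s + g)
  have hF : ∀ u, HasDerivAt F (-(γ * V u + g)) u := fun u =>
    (((continuous_const.mul hVc).add continuous_const).integral_hasStrictDerivAt 0 u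
      |>.hasDerivAt).const_sub ν
  -- `e^{γu} (F u + g/γ)` has derivative `e^{γu} γ (F u - V u)`, which vanishes while `V = F`.
  let W : ℝ → ℝ := fun u => Real.exp (γ * u) * (F u + g / γ)
  have hW : ∀ u, HasDerivAt W (Real.exp (γ * u) * (γ * (F u - V u))) u := fun u => by
    have := (((hasDerivAt_id' u).const_mul γ).exp).mul ((hF u).add_const (g / γ))
    refine this.congr_deriv ?_
    field_simp
    ring
  have hWconst := constant_of_has_deriv_right_zero (a := 0) (b := t₀) (f := W)
    (fun u _ => (hW u).continuousAt.continuousWithinAt) fun u hu => by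
      have hVF : V u = F u := hV u (Ico_subset_Icc_self hu)
      simpa [hVF] using (hW u).hasDerivWithinAt
  intro u hu
  have h := hWconst u hu
  simp only [W, F, intervalIntegral.integral_same, mul_zero, Real.exp_zero, one_mul,
    sub_zero] at h
  show V u = (ν + g / γ) * Real.exp (-(γ * u)) - g / γ
  rw [hV u hu, Real.exp_neg, ← h]
  field_simp
  ring

lemma forall_le_of_forall_ne {V : ℝ → ℝ} {a t₀ : ℝ} (hVc : Continuous V) (h0 : a ≤ V 0)
    (hne : ∀ u ∈ Icc 0 t₀, V u ≠ a) : ∀ u ∈ Icc 0 t₀, a ≤ V u := by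
  intro u hu
  by_contra! h
  obtain ⟨s, hs, hVs⟩ := intermediate_value_Icc' hu.1 hVc.continuousOn ⟨h.le, h0⟩
  exact hne s ⟨hs.1, hs.2.trans hu.2⟩ hVs

lemma exists_le_brownian_of_gap_hits_zero_first {γ g a x ν : ℝ} (hγ : 0 < γ) (hg : 0 < g)
    (ha : -(g / γ) < a) (hx : 0 < x) (hν : a ≤ ν)
    (hν' : ν ≤ (a + g / γ) * Real.exp (γ ^ 2 * x / (4 * g)) - g / γ)
    {H V L B : ℝ → ℝ} (hH0 : H 0 = x / 2) (hV0 : V 0 = ν)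
    (hHc : Continuous H) (hVc : Continuous V) (hLc : Continuous L) (hL0 : L 0 = 0)
    (hLsupp : ∀ s t : ℝ, 0 ≤ s → s ≤ t → (∀ u ∈ Icc s t, H u ≠ 0) → L s = L t)
    (heqH : ∀ t, 0 ≤ t → H t = H 0 + (∫ u in (0:ℝ)..t, V u) - B t + L t)
    (heqV : ∀ t, 0 ≤ t → V t = V 0 - (∫ u in (0:ℝ)..t, (γ * V u + g)) + L t)
    (hlt : hitFrom H 0 0 < hitFrom V a 0) :
    ∃ t ∈ Icc 0 (γ * x / (4 * g)), x / 4 ≤ B t := by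
  obtain ⟨t₀, ht₀, hHt₀, hhit⟩ := exists_hitFrom_zero_eq_ofReal hHc (hlt.trans_le le_top)
  rw [hhit] at hlt
  have hVne : ∀ u ∈ Icc 0 t₀, V u ≠ a := fun u hu =>
    ne_of_ofReal_lt_hitFrom_zero hu.1 ((ENNReal.ofReal_le_ofReal hu.2).trans_lt hlt)
  have hVa := forall_le_of_forall_ne hVc (hV0 ▸ hν) hVne
  have hHne : ∀ u ∈ Ico 0 t₀, H u ≠ 0 := fun u hu => ne_of_ofReal_lt_hitFrom_zero hu.1
    (hhit ▸ (ENNReal.ofReal_lt_ofReal_iff_of_nonneg hu.1).mpr hu.2)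
  have hL := eqOn_zero_of_const_off_zeros hLc hL0 hLsupp hHne
  have hV := eqOn_exp_of_eq_sub_integral (t₀ := t₀) hγ.ne' hVc fun u hu => by
    simpa [hV0, hL hu] using heqV u hu.1
  set T := γ * x / (4 * g)
  have hT : t₀ ≤ T := by
    by_contra! h
    have hTmem : T ∈ Icc 0 t₀ := ⟨by positivity, h.le⟩
    refine hVne T hTmem (le_antisymm ?_ (hVa T hTmem))
    have hexp : Real.exp (γ ^ 2 * x / (4 * g)) = (Real.exp (-(γ * T)))⁻¹ := by
      rw [Real.exp_neg, inv_inv, show γ * T = γ ^ 2 * x / (4 * g) by ring]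
    rw [hexp, ← div_eq_mul_inv, le_sub_iff_add_le, le_div_iff₀ (Real.exp_pos _)] at hν'
    rw [hV hTmem]
    linarith
  refine ⟨t₀, ⟨ht₀, hT⟩, ?_⟩
  have hint : a * t₀ ≤ ∫ u in (0:ℝ)..t₀, V u := by
    have := intervalIntegral.integral_mono_on (μ := volume) ht₀ intervalIntegrable_const
      (hVc.intervalIntegrable 0 t₀) hVa
    simpa [mul_comm] using this
  have hH := heqH t₀ ht₀
  rw [hHt₀, hH0, hL ⟨ht₀, le_rfl⟩, Pi.zero_apply] at hH
  have hgT : g / γ * T = x / 4 := by simp only [T]; field_simp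
  have : -(g / γ) * T ≤ a * t₀ := by nlinarith [div_pos hg hγ]
  linarith

section Gaussian

open Real Topology

lemma half_le_gaussianReal_Ici_zero (v : ℝ≥0) : 1 / 2 ≤ gaussianReal 0 v (Ici 0) := by
  have hsymm : gaussianReal 0 v (Iic 0) = gaussianReal 0 v (Ici 0) := by
    have h := congrArg (· (Ici (0 : ℝ))) (gaussianReal_map_neg (μ := 0) (v := v))
    simp only [neg_zero] at h
    rw [← h, Measure.map_apply measurable_neg measurableSet_Ici]
    congr 1
    ext y
    simp
  apply ENNReal.div_le_of_le_mul
  calc (1 : ℝ≥0∞) = gaussianReal 0 v (Iic 0 ∪ Ici 0) := by rw [Iic_union_Ici, measure_univ]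
    _ ≤ gaussianReal 0 v (Iic 0) + gaussianReal 0 v (Ici 0) := measure_union_le _ _
    _ = gaussianReal 0 v (Ici 0) * 2 := by rw [hsymm, mul_two]

lemma integral_Ioi_mul_exp_neg_mul_sq {b : ℝ} (hb : 0 < b) (c : ℝ) :
    ∫ y in Ioi c, y * exp (-b * y ^ 2) = exp (-b * c ^ 2) / (2 * b) := by
  have hderiv : ∀ y, HasDerivAt (fun y => -exp (-b * y ^ 2) / (2 * b)) (y * exp (-b * y ^ 2)) y :=
    fun y => by
      have := ((((hasDerivAt_pow 2 y).const_mul (-b)).exp).neg).div_const (2 * b)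
      refine this.congr_deriv ?_
      field_simp
      ring
  have hlim : Tendsto (fun y => -exp (-b * y ^ 2) / (2 * b)) atTop (𝓝 0) := by
    have := (tendsto_exp_atBot.comp ((tendsto_pow_atTop two_ne_zero).const_mul_atTop_of_neg
      (neg_lt_zero.mpr hb))).neg.div_const (2 * b)
    simpa [Function.comp_def] using this
  rw [integral_Ioi_of_hasDerivAt_of_tendsto' (fun y _ => hderiv y)
    (integrable_mul_exp_neg_mul_sq hb).integrableOn hlim]
  ring

lemma gaussianReal_Ici_le {v : ℝ≥0} (hv : v ≠ 0) {c : ℝ} (hc : 0 < c) :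
    gaussianReal 0 v (Ici c) ≤ ENNReal.ofReal (√(v / (2 * π)) / c * exp (-(c ^ 2 / (2 * v)))) := by
  have hv' : (0 : ℝ) < v := by positivity
  set b : ℝ := (2 * v)⁻¹
  set K : ℝ := (√(2 * π * v))⁻¹
  have hpdf : ∀ y, gaussianPDFReal 0 v y = K * exp (-b * y ^ 2) := fun y => by
    simp only [gaussianPDFReal, sub_zero, K, b]
    ring_nf
  rw [gaussianReal_apply_eq_integral 0 hv]
  refine ENNReal.ofReal_le_ofReal ?_
  -- Mills' bound: on `[c, ∞)` the density is at most `y / c` times itself.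
  calc ∫ y in Ici c, gaussianPDFReal 0 v y
      ≤ ∫ y in Ici c, K / c * (y * exp (-b * y ^ 2)) := by
        refine setIntegral_mono_on (integrable_gaussianPDFReal 0 v).integrableOn
          ((integrable_mul_exp_neg_mul_sq (by positivity)).const_mul _).integrableOn
          measurableSet_Ici fun y (hy : c ≤ y) => ?_
        rw [hpdf, div_mul_eq_mul_div, le_div_iff₀ hc]
        have : 0 ≤ K * exp (-b * y ^ 2) := by positivity
        nlinarith
    _ = K / c * (exp (-b * c ^ 2) / (2 * b)) := by
        rw [integral_const_mul, integral_Ici_eq_integral_Ioi,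
          integral_Ioi_mul_exp_neg_mul_sq (by positivity)]
    _ = √(v / (2 * π)) / c * exp (-(c ^ 2 / (2 * v))) := by
        have hK : K / (2 * b) = √(v / (2 * π)) := by
          have hsv := mul_self_sqrt hv'.le
          simp only [K, b]
          rw [sqrt_div' _ (by positivity), sqrt_mul (by positivity)]
          field_simp
          linarith
        rw [← hK]
        simp only [b]
        field_simp

lemma two_mul_gaussianReal_Ici_le {γ g x : ℝ} (hγ : 0 < γ) (hg : 0 < g) (hx : 0 < x) :
    2 * gaussianReal 0 (γ * x / (4 * g)).toNNReal (Ici (x / 4)) ≤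
      ENNReal.ofReal (2 * √(2 * γ) / √(π * g * x) * exp (-(x * g / (8 * γ)))) := by
  set T := γ * x / (4 * g)
  have hT : 0 < T := by positivity
  have hexp : (x / 4) ^ 2 / (2 * T) = x * g / (8 * γ) := by simp only [T]; field_simp; ring
  have hpref : 2 * (√(T / (2 * π)) / (x / 4)) = 2 * √(2 * γ) / √(π * g * x) := by
    rw [← sq_eq_sq₀ (by positivity) (by positivity)]
    simp only [div_pow, mul_pow]
    rw [sq_sqrt (by positivity), sq_sqrt (by positivity), sq_sqrt (by positivity)]
    simp only [T]
    field_simp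
    ring
  calc 2 * gaussianReal 0 T.toNNReal (Ici (x / 4))
      ≤ 2 * ENNReal.ofReal (√(T / (2 * π)) / (x / 4) * exp (-((x / 4) ^ 2 / (2 * T)))) := by
        grw [gaussianReal_Ici_le (by simpa using hT) (by positivity), coe_toNNReal _ hT.le]
    _ = ENNReal.ofReal (2 * √(2 * γ) / √(π * g * x) * exp (-(x * g / (8 * γ)))) := by
        rw [← ENNReal.ofReal_ofNat 2, ← ENNReal.ofReal_mul zero_le_two, hexp, ← hpref,
          mul_assoc]

end Gaussian

lemma exists_measurableSet_preimage_eq_firstPassage {Ω : Type*} (X : ℕ → Ω → ℝ) (c : ℝ)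
    (k : ℕ) : ∃ M : Set (Fin k → ℝ), MeasurableSet M ∧
      {ω | c ≤ ∑ i ∈ Finset.range k, X i ω ∧ ∀ j < k, ∑ i ∈ Finset.range j, X i ω < c} =
        (fun ω (i : Fin k) => X i ω) ⁻¹' M := by
  let pre : ℕ → (Fin k → ℝ) → ℝ := fun j v =>
    ∑ i ∈ Finset.range j, if h : i < k then v ⟨i, h⟩ else 0
  have hpre : ∀ j, Measurable (pre j) := fun j => Finset.measurable_sum _ fun i _ => by
    split_ifs
    exacts [measurable_pi_apply _, measurable_const]
  have hpreS : ∀ j ≤ k, ∀ ω, pre j (fun i : Fin k => X i ω) = ∑ i ∈ Finset.range j, X i ω :=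
    fun j hj ω => Finset.sum_congr rfl fun i hi => dif_pos ((Finset.mem_range.mp hi).trans_le hj)
  refine ⟨{v | c ≤ pre k v} ∩ ⋂ j ∈ Finset.range k, {v | pre j v < c}, ?_, ?_⟩
  · exact (measurableSet_le measurable_const (hpre k)).inter
      (Finset.measurableSet_biInter _ fun j _ => measurableSet_lt (hpre j) measurable_const)
  · ext ω
    simp only [mem_ofPred_eq, mem_preimage, mem_inter_iff, mem_iInter, Finset.mem_range,
      hpreS k le_rfl]
    exact and_congr_right' <| forall₂_congr fun j hj => by rw [hpreS j hj.le]

lemma measure_le_two_mul_measure_inter {Ω : Type*} [MeasurableSpace Ω] {P : Measure Ω}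
    {s t : Set Ω} (hst : P (s ∩ t) = P s * P t) (ht : 1 / 2 ≤ P t) :
    P s ≤ 2 * P (s ∩ t) :=
  calc P s = 2 * (P s * (1 / 2)) := by
        rw [mul_comm, mul_assoc, one_div, ENNReal.inv_mul_cancel two_ne_zero ENNReal.ofNat_ne_top,
          mul_one]
    _ ≤ 2 * P (s ∩ t) := by grw [hst, ht]

lemma measure_exists_sum_range_ge_le_two_mul {Ω : Type*} [MeasurableSpace Ω] (P : Measure Ω)
    {X : ℕ → Ω → ℝ} (hX : ∀ i, Measurable (X i)) {n : ℕ}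
    (hind : ∀ k < n,
      IndepFun (fun ω (i : Fin k) => X i ω) (fun ω => ∑ i ∈ Finset.Ico k n, X i ω) P)
    (hhalf : ∀ k < n, 1 / 2 ≤ P {ω | 0 ≤ ∑ i ∈ Finset.Ico k n, X i ω}) (c : ℝ) :
    P {ω | ∃ k ≤ n, c ≤ ∑ i ∈ Finset.range k, X i ω} ≤
      2 * P {ω | c ≤ ∑ i ∈ Finset.range n, X i ω} := by
  -- Split according to the first index `k` with `c ≤ S k`: that event depends on `X 0, …, X (k-1)`
  -- only, and on it the independent tail `S n - S k` is nonnegative with probability `≥ 1/2`.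
  let S : ℕ → Ω → ℝ := fun k ω => ∑ i ∈ Finset.range k, X i ω
  let A : ℕ → Set Ω := fun k => {ω | c ≤ S k ω ∧ ∀ j < k, S j ω < c}
  let Tail : ℕ → Set Ω := fun k => {ω | 0 ≤ ∑ i ∈ Finset.Ico k n, X i ω}
  have hTail : ∀ k, MeasurableSet (Tail k) := fun k =>
    measurableSet_le measurable_const (Finset.measurable_sum _ fun i _ => hX i)
  have hAmeas : ∀ k, MeasurableSet (A k) := fun k => by
    obtain ⟨M, hM, hAM⟩ := exists_measurableSet_preimage_eq_firstPassage X c k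
    have hAk : A k = (fun ω (i : Fin k) => X i ω) ⁻¹' M := hAM
    exact hAk ▸ measurable_pi_lambda (fun ω (i : Fin k) => X i ω) (fun i => hX i) hM
  have hA2 : ∀ k ≤ n, P (A k) ≤ 2 * P (A k ∩ Tail k) := by
    intro k hk
    rcases hk.lt_or_eq with hk | rfl
    · obtain ⟨M, hM, hAM⟩ := exists_measurableSet_preimage_eq_firstPassage X c k
      have hAk : A k = (fun ω (i : Fin k) => X i ω) ⁻¹' M := hAM
      refine measure_le_two_mul_measure_inter ?_ (hhalf k hk)
      rw [hAk]
      exact (hind k hk).measure_inter_preimage_eq_mul M (Ici 0) hM measurableSet_Ici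
    · have : Tail k = univ := by ext; simp [Tail]
      rw [this, inter_univ]
      exact le_mul_of_one_le_left' one_le_two
  have hcover : {ω | ∃ k ≤ n, c ≤ S k ω} ⊆ ⋃ k ∈ Finset.range (n + 1), A k := by
    rintro ω ⟨k, hk, hck⟩
    have hex : ∃ m, c ≤ S m ω := ⟨k, hck⟩
    exact mem_biUnion (Finset.mem_range.mpr (Nat.lt_succ_of_le ((Nat.find_min' hex hck).trans hk)))
      ⟨Nat.find_spec hex, fun j hj => not_le.mp (Nat.find_min hex hj)⟩
  have hdisj : PairwiseDisjoint ↑(Finset.range (n + 1)) A := by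
    intro k _ l _ hkl
    rcases hkl.lt_or_gt with h | h
    · exact disjoint_left.mpr fun ω h1 h2 => (h2.2 k h).not_ge h1.1
    · exact disjoint_left.mpr fun ω h1 h2 => (h1.2 l h).not_ge h2.1
  have hsplit : ⋃ k ∈ Finset.range (n + 1), (A k ∩ Tail k) ⊆ {ω | c ≤ S n ω} := by
    refine iUnion₂_subset fun k hk ω ⟨⟨hck, _⟩, htail⟩ => ?_
    have := Finset.sum_range_add_sum_Ico (fun i => X i ω)
      (Nat.lt_succ_iff.mp (Finset.mem_range.mp hk))
    simp only [Tail, mem_ofPred_eq] at htail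
    simp only [S, mem_ofPred_eq, ← this]
    linarith
  calc P {ω | ∃ k ≤ n, c ≤ S k ω}
      ≤ P (⋃ k ∈ Finset.range (n + 1), A k) := measure_mono hcover
    _ ≤ ∑ k ∈ Finset.range (n + 1), P (A k) := measure_biUnion_finset_le _ _
    _ ≤ ∑ k ∈ Finset.range (n + 1), 2 * P (A k ∩ Tail k) := Finset.sum_le_sum fun k hk =>
        hA2 k (Nat.lt_succ_iff.mp (Finset.mem_range.mp hk))
    _ = 2 * P (⋃ k ∈ Finset.range (n + 1), (A k ∩ Tail k)) := by
        rw [← Finset.mul_sum, measure_biUnion_finset (hdisj.mono fun k => inter_subset_left)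
          fun k _ => (hAmeas k).inter (hTail k)]
    _ ≤ 2 * P {ω | c ≤ S n ω} := by grw [hsplit]

lemma ProbabilityTheory.iIndepFun.indepFun_prefix_sum_Ico {Ω : Type*} [MeasurableSpace Ω]
    {P : Measure Ω} {X : ℕ → Ω → ℝ} {n : ℕ} (hind : iIndepFun (fun (i : Fin n) => X i) P)
    (hX : ∀ i, Measurable (X i)) {k : ℕ} (hk : k ≤ n) :
    IndepFun (fun ω (i : Fin k) => X i ω) (fun ω => ∑ i ∈ Finset.Ico k n, X i ω) P := by
  let S : Finset (Fin n) := {i | (i : ℕ) < k}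
  let T : Finset (Fin n) := {i | k ≤ (i : ℕ)}
  have hST : Disjoint S T := Finset.disjoint_filter.mpr fun i _ h => not_le.mpr h
  let φ : (S → ℝ) → Fin k → ℝ := fun v j =>
    v ⟨⟨j, j.2.trans_le hk⟩, Finset.mem_filter.mpr ⟨Finset.mem_univ _, j.2⟩⟩
  let ψ : (T → ℝ) → ℝ := fun v => ∑ i, v i
  have hψ : ∀ ω, ψ (fun i : T => X i ω) = ∑ i ∈ Finset.Ico k n, X i ω := fun ω => by
    rw [show ψ (fun i : T => X i ω) = ∑ i : T, X i ω from rfl,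
      Finset.sum_coe_sort T (fun i : Fin n => X i ω), Finset.sum_filter,
      Fin.sum_univ_eq_sum_range (fun i => if k ≤ i then X i ω else 0), ← Finset.sum_filter]
    congr 1
    ext i
    simp only [Finset.mem_filter, Finset.mem_range, Finset.mem_Ico]
    omega
  have := (hind.indepFun_finset S T hST fun i => hX i).comp
    (measurable_pi_lambda φ fun j => measurable_pi_apply _)
    (Finset.measurable_sum Finset.univ fun i _ => measurable_pi_apply i : Measurable ψ)
  have hφ : (φ ∘ fun ω (i : S) => X i ω) = fun ω (i : Fin k) => X i ω := rfl
  rwa [hφ, show (ψ ∘ fun ω (i : T) => X i ω) = _ from funext hψ] at this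

lemma exists_dyadic_abs_sub_lt {T t δ : ℝ} (hT : 0 < T) (ht : t ∈ Icc 0 T) (hδ : 0 < δ) :
    ∃ j k : ℕ, k ≤ 2 ^ j ∧ |k * T / 2 ^ j - t| < δ := by
  obtain ⟨j, hj⟩ := pow_unbounded_of_one_lt (T / δ) one_lt_two
  have h2j : (0 : ℝ) < 2 ^ j := by positivity
  have hmesh : T / 2 ^ j < δ := by
    rw [div_lt_iff₀ hδ] at hj
    rw [div_lt_iff₀ h2j]
    linarith
  have hu : 0 ≤ t * 2 ^ j / T := div_nonneg (mul_nonneg ht.1 h2j.le) hT.le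
  refine ⟨j, ⌊t * 2 ^ j / T⌋₊, ?_, ?_⟩
  · refine Nat.floor_le_of_le ?_
    push_cast
    rw [div_le_iff₀ hT]
    nlinarith [ht.2]
  · have h1 := Nat.floor_le hu
    have h2 := Nat.lt_floor_add_one (t * 2 ^ j / T)
    rw [le_div_iff₀ hT] at h1
    rw [div_lt_iff₀ hT] at h2
    have h3 : ⌊t * 2 ^ j / T⌋₊ * T / 2 ^ j ≤ t := by rw [div_le_iff₀ h2j]; linarith
    have h4 : t < ⌊t * 2 ^ j / T⌋₊ * T / 2 ^ j + T / 2 ^ j := by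
      rw [← add_div, lt_div_iff₀ h2j]; linarith
    rw [abs_sub_lt_iff]
    constructor <;> linarith

namespace IsStdBrownian

variable {Ω : Type*} [MeasurableSpace Ω] {P : Measure Ω} {B : ℝ → Ω → ℝ}

lemma measure_sub_preimage (hB : IsStdBrownian P B) {s t : ℝ} (hs : 0 ≤ s) (hst : s ≤ t)
    {A : Set ℝ} (hA : MeasurableSet A) :
    P ((fun ω => B t ω - B s ω) ⁻¹' A) = gaussianReal 0 (t - s).toNNReal A := by
  have hm : Measurable fun ω => B t ω - B s ω := (hB.measurable t).sub (hB.measurable s)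
  rw [← Measure.map_apply hm hA, hB.gaussIncr s t hs hst]

lemma measure_exists_sub_ge_le (hB : IsStdBrownian P B) {t : ℕ → ℝ} (ht : Monotone t)
    (ht0 : 0 ≤ t 0) (n : ℕ) (c : ℝ) :
    P {ω | ∃ k ≤ n, c ≤ B (t k) ω - B (t 0) ω} ≤
      2 * gaussianReal 0 (t n - t 0).toNNReal (Ici c) := by
  let X : ℕ → Ω → ℝ := fun i ω => B (t (i + 1)) ω - B (t i) ω
  have hX : ∀ i, Measurable (X i) := fun i => (hB.measurable _).sub (hB.measurable _)
  have hsum : ∀ k ω, ∑ i ∈ Finset.range k, X i ω = B (t k) ω - B (t 0) ω := fun k ω =>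
    Finset.sum_range_sub (fun i => B (t i) ω) k
  have hIco : ∀ k ≤ n, ∀ ω, ∑ i ∈ Finset.Ico k n, X i ω = B (t n) ω - B (t k) ω :=
    fun k hk ω => Finset.sum_Ico_sub (fun i => B (t i) ω) hk
  have ht_nonneg : ∀ i, 0 ≤ t i := fun i => ht0.trans (ht i.zero_le)
  have key := measure_exists_sum_range_ge_le_two_mul P hX
    (fun k hk => (hB.indepIncr n t ht ht_nonneg).indepFun_prefix_sum_Ico hX hk.le)
    (fun k hk => by
      simp only [hIco k hk.le]
      exact (half_le_gaussianReal_Ici_zero _).trans_eq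
        (hB.measure_sub_preimage (ht_nonneg k) (ht hk.le) measurableSet_Ici).symm) c
  simp only [hsum] at key
  refine key.trans_eq ?_
  rw [← hB.measure_sub_preimage ht0 (ht n.zero_le) measurableSet_Ici]
  rfl

lemma measure_exists_ge_le_of_lt (hB : IsStdBrownian P B) {T : ℝ} (hT : 0 < T) {c l : ℝ}
    (hcl : c < l) :
    P {ω | ∃ t ∈ Icc 0 T, l ≤ B t ω} ≤ 2 * gaussianReal 0 T.toNNReal (Ici c) := by
  let grid : ℕ → ℕ → ℝ := fun j k => min (k * T / 2 ^ j) T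
  have hgrid0 : ∀ j, grid j 0 = 0 := by simp [grid, hT.le]
  have hgridT : ∀ j, grid j (2 ^ j) = T := by simp [grid]
  have hgrid_mono : ∀ j, Monotone (grid j) := fun j k k' hk =>
    min_le_min_right T (by gcongr)
  let D : ℕ → Set Ω := fun j => {ω | ∃ k ≤ 2 ^ j, c ≤ B (grid j k) ω - B 0 ω}
  have hD : Monotone D := by
    rintro j j' hj ω ⟨k, hk, hck⟩
    have hpow : (2 : ℕ) ^ j' = 2 ^ j * 2 ^ (j' - j) := by rw [← pow_add, Nat.add_sub_cancel' hj]
    refine ⟨k * 2 ^ (j' - j), ?_, ?_⟩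
    · rw [hpow]
      exact Nat.mul_le_mul_right _ hk
    · have : ((k * 2 ^ (j' - j) : ℕ) : ℝ) * T / 2 ^ j' = k * T / 2 ^ j := by
        rw [show (2 : ℝ) ^ j' = ((2 ^ j' : ℕ) : ℝ) by push_cast; rfl, hpow]
        push_cast
        field_simp
      simpa only [grid, this] using hck
  have hcover : {ω | ∃ t ∈ Icc 0 T, l ≤ B t ω} ≤ᵐ[P] ⋃ j, D j := by
    filter_upwards [hB.start, hB.contPaths] with ω h0 hcont
    rintro ⟨t, ht, hlt⟩
    obtain ⟨δ, hδ, hball⟩ :=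
      Metric.isOpen_iff.mp (isOpen_lt continuous_const hcont) t (hcl.trans_le hlt)
    obtain ⟨j, k, hk, hdist⟩ := exists_dyadic_abs_sub_lt hT ht hδ
    have hkT : k * T / 2 ^ j ≤ T := by
      rw [div_le_iff₀ (by positivity)]
      exact mul_le_mul_of_nonneg_right (by exact_mod_cast hk) hT.le |>.trans_eq (mul_comm _ _)
    refine mem_iUnion.mpr ⟨j, k, hk, ?_⟩
    simp only [grid, min_eq_left hkT, h0, sub_zero]
    exact (hball (by rwa [Metric.mem_ball, Real.dist_eq])).le
  calc P {ω | ∃ t ∈ Icc 0 T, l ≤ B t ω}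
      ≤ P (⋃ j, D j) := measure_mono_ae hcover
    _ = ⨆ j, P (D j) := hD.measure_iUnion
    _ ≤ 2 * gaussianReal 0 T.toNNReal (Ici c) := iSup_le fun j => by
        have h := hB.measure_exists_sub_ge_le (hgrid_mono j) (hgrid0 j).ge (2 ^ j) c
        rwa [hgridT, hgrid0, sub_zero] at h

lemma measure_exists_ge_le (hB : IsStdBrownian P B) {T : ℝ} (hT : 0 < T) (l : ℝ) :
    P {ω | ∃ t ∈ Icc 0 T, l ≤ B t ω} ≤ 2 * gaussianReal 0 T.toNNReal (Ici l) := by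
  let s : ℕ → Set ℝ := fun n => Ici (l - 1 / (n + 1))
  have hs : Antitone s := fun n m h => Ici_subset_Ici.mpr (by gcongr)
  have hInter : ⋂ n, s n = Ici l := by
    ext y
    simp only [s, mem_iInter, mem_Ici]
    refine ⟨fun h => ?_, fun h n => le_trans (by simp only [sub_le_self_iff]; positivity) h⟩
    by_contra! hy
    obtain ⟨n, hn⟩ := exists_nat_one_div_lt (sub_pos.mpr hy)
    linarith [h n]
  rw [← hInter, hs.measure_iInter (fun n => measurableSet_Ici.nullMeasurableSet)
    ⟨0, measure_ne_top _ _⟩, ENNReal.mul_iInf_of_ne two_ne_zero ENNReal.ofNat_ne_top]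
  exact le_iInf fun n =>
    hB.measure_exists_ge_le_of_lt hT (by simp only [sub_lt_self_iff]; positivity)

end IsStdBrownian

/-- Bound on the probability that the gap vanishes before the velocity drops
to the level `a`. -/
theorem gap_hits_zero_before_velocity_drops
    (γ g : ℝ) (hγ : 0 < γ) (hg : 0 < g)
    {Ω : Type*} [MeasurableSpace Ω] (sys : InertSystem γ g Ω) :
    ∀ a : ℝ, -(g / γ) < a → ∀ x : ℝ, 0 < x →
      ∀ ν : ℝ, a ≤ ν → ν ≤ (a + g / γ) * Real.exp (γ ^ 2 * x / (4 * g)) - g / γ →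
        sys.law (x / 2, ν) {ω | sys.tauH 0 ω < sys.tauV a ω} ≤
          ENNReal.ofReal ((2 * Real.sqrt (2 * γ) / Real.sqrt (Real.pi * g * x)) *
            Real.exp (-(x * g / (8 * γ)))) := by
  intro a ha x hx ν hν hν'
  set T := γ * x / (4 * g)
  have hT : 0 < T := by positivity
  have hsub : {ω | sys.tauH 0 ω < sys.tauV a ω} ≤ᵐ[sys.law (x / 2, ν)]
      {ω | ∃ t ∈ Icc 0 T, x / 4 ≤ sys.B t ω} := by
    filter_upwards [sys.init (x / 2, ν), sys.contPaths (x / 2, ν), sys.loc_zero (x / 2, ν),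
      sys.loc_support (x / 2, ν), sys.eqH (x / 2, ν), sys.eqV (x / 2, ν)]
      with ω hinit hcont hL0 hLsupp hH hV hlt
    exact exists_le_brownian_of_gap_hits_zero_first hγ hg ha hx hν hν' hinit.1 hinit.2 hcont.1
      hcont.2.1 hcont.2.2 hL0 hLsupp hH hV hlt
  calc sys.law (x / 2, ν) {ω | sys.tauH 0 ω < sys.tauV a ω}
      ≤ sys.law (x / 2, ν) {ω | ∃ t ∈ Icc 0 T, x / 4 ≤ sys.B t ω} := measure_mono_ae hsub
    _ ≤ 2 * gaussianReal 0 T.toNNReal (Ici (x / 4)) :=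
        (sys.brownian (x / 2, ν)).measure_exists_ge_le hT _
    _ ≤ _ := two_mul_gaussianReal_Ici_le hγ hg hx
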